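/- arXiv:1410.1913 — 2 statements merged into one kernel-verified Lean document; each statement's English description precedes it below -/
import Mathlib

section
/- For every u ∈ C_c^∞(ℝⁿ₊) where ℝⁿ₊ = {x ∈ ℝⁿ : x₁ > 0} and n ≥ 3, one has the Hardy inequality (n²/4) ∫_{ℝⁿ₊} u²/|x|² dx ≤ ∫_{ℝⁿ₊} |∇u|² dx. -/
open MeasureTheory

noncomputable section

open Finset

/-- squared norm on Euclidean space is the sum of squares of coordinates -/
lemma euclid_norm_sq_eq_sum {n : ℕ} (x : EuclideanSpace ℝ (Fin n)) :
    ‖x‖ ^ 2 = ∑ i, x i ^ 2 := by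
  rw [EuclideanSpace.norm_eq, Real.sq_sqrt (by positivity)]
  simp [sq_abs]

/-- squared operator norm of a functional is the sum of squares of its coordinates -/
lemma euclid_clm_norm_sq {n : ℕ} (f : EuclideanSpace ℝ (Fin n) →L[ℝ] ℝ) :
    ‖f‖ ^ 2 = ∑ i, (f (EuclideanSpace.single i 1)) ^ 2 := by
  set g := (InnerProductSpace.toDual ℝ (EuclideanSpace ℝ (Fin n))).symm f with hg
  have h1 : ‖f‖ = ‖g‖ := by
    rw [hg, LinearIsometryEquiv.norm_map]
  have h2 : ∀ i, f (EuclideanSpace.single i 1) = g i := by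
    intro i
    rw [← InnerProductSpace.toDual_symm_apply (𝕜 := ℝ), ← hg,
      EuclideanSpace.inner_single_right]
    simp
  rw [h1, euclid_norm_sq_eq_sum]
  exact Finset.sum_congr rfl fun i _ => by rw [h2]

/-- the integral of a directional derivative of a compactly supported smooth function vanishes -/
lemma integral_fderiv_apply_eq_zero {n : ℕ} {f : EuclideanSpace ℝ (Fin n) → ℝ}
    (hf : ContDiff ℝ (⊤ : ℕ∞) f) (hcs : HasCompactSupport f) (v : EuclideanSpace ℝ (Fin n)) :
    ∫ x, fderiv ℝ f x v = 0 := by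
  have hfd : Continuous fun x => fderiv ℝ f x v :=
    (hf.continuous_fderiv (by simp)).clm_apply continuous_const
  have h1 : Integrable (fun x => fderiv ℝ f x v) :=
    hfd.integrable_of_hasCompactSupport (hcs.fderiv_apply ℝ v)
  have h2 : Integrable f := hf.continuous.integrable_of_hasCompactSupport hcs
  have key := integral_mul_fderiv_eq_neg_fderiv_mul_of_integrable
    (f := f) (g := fun _ => (1:ℝ)) (v := v) (μ := volume)
    (by simpa using h1) (by simp) (by simpa using h2)
    (fun x _ => hf.differentiable (by simp) x) (fun x _ => differentiable_const 1 x)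
  simp only [fderiv_const_apply, Pi.zero_apply, ContinuousLinearMap.zero_apply, mul_zero, mul_one,
    integral_zero] at key
  linarith [key]

/-- the components of the vector field used in the Hardy inequality proof -/
def cf (n : ℕ) (i0 i : Fin n) (x : EuclideanSpace ℝ (Fin n)) : ℝ :=
  (-(n:ℝ)/2) * x i / ‖x‖^2 + (if i = i0 then (x i0)⁻¹ else 0)

/-- the `i`-th partial derivative of `cf` -/
def dcf (n : ℕ) (i0 i : Fin n) (x : EuclideanSpace ℝ (Fin n)) : ℝ :=
  (-(n:ℝ)/2) * (‖x‖^2 - 2*(x i)^2) / (‖x‖^2)^2 + (if i = i0 then -((x i0)^2)⁻¹ else 0)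

lemma cf_hasFDerivAt {n : ℕ} (i0 i : Fin n) (x : EuclideanSpace ℝ (Fin n)) (hx : x i0 ≠ 0) :
    ∃ C : EuclideanSpace ℝ (Fin n) →L[ℝ] ℝ,
      HasFDerivAt (cf n i0 i) C x ∧
      C (EuclideanSpace.single i 1) = dcf n i0 i x := by
  have hxne : x ≠ 0 := fun h => hx (by simp [h])
  have hr : ‖x‖^2 ≠ 0 := pow_ne_zero _ (norm_ne_zero_iff.2 hxne)
  have hproj : ∀ j : Fin n, HasFDerivAt (fun y : EuclideanSpace ℝ (Fin n) => y j)
      (EuclideanSpace.proj j : EuclideanSpace ℝ (Fin n) →L[ℝ] ℝ) x :=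
    fun j => (EuclideanSpace.proj (𝕜 := ℝ) j).hasFDerivAt
  have hA : HasFDerivAt (fun y : EuclideanSpace ℝ (Fin n) => (-(n:ℝ)/2) * y i)
      ((-(n:ℝ)/2) • (EuclideanSpace.proj i : EuclideanSpace ℝ (Fin n) →L[ℝ] ℝ)) x :=
    (hproj i).const_mul _
  have hN : HasFDerivAt (fun y : EuclideanSpace ℝ (Fin n) => ‖y‖^2)
      ((2:ℕ) • (innerSL ℝ x)) x := (hasStrictFDerivAt_norm_sq x).hasFDerivAt
  have hB : HasFDerivAt (fun y : EuclideanSpace ℝ (Fin n) => (‖y‖^2)⁻¹)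
      ((-((‖x‖^2)^2)⁻¹) • ((2:ℕ) • (innerSL ℝ x))) x :=
    (hasDerivAt_inv hr).comp_hasFDerivAt x hN
  have hmul : HasFDerivAt (fun y : EuclideanSpace ℝ (Fin n) => ((-(n:ℝ)/2) * y i) * (‖y‖^2)⁻¹)
      ((((-(n:ℝ)/2) * x i) • ((-((‖x‖^2)^2)⁻¹) • ((2:ℕ) • (innerSL ℝ x)))) +
        ((‖x‖^2)⁻¹ • ((-(n:ℝ)/2) • (EuclideanSpace.proj i : EuclideanSpace ℝ (Fin n) →L[ℝ] ℝ)))) x :=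
    hA.mul hB
  unfold cf dcf
  by_cases h : i = i0
  · subst h
    have hI : HasFDerivAt (fun y : EuclideanSpace ℝ (Fin n) => (y i)⁻¹)
        ((-((x i)^2)⁻¹) • (EuclideanSpace.proj i : EuclideanSpace ℝ (Fin n) →L[ℝ] ℝ)) x :=
      (hasDerivAt_inv hx).comp_hasFDerivAt x (hproj i)
    refine ⟨((-(n:ℝ)/2 * x i) • (-((‖x‖^2)^2)⁻¹ • ((2:ℕ) • innerSL ℝ x)) +
        (‖x‖^2)⁻¹ • ((-(n:ℝ)/2) • (EuclideanSpace.proj i : EuclideanSpace ℝ (Fin n) →L[ℝ] ℝ))) +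
        (-((x i)^2)⁻¹) • (EuclideanSpace.proj i : EuclideanSpace ℝ (Fin n) →L[ℝ] ℝ), ?_, ?_⟩
    · simpa only [if_pos rfl, ↓reduceIte, div_eq_mul_inv, Pi.add_def] using hmul.add hI
    · simp only [ContinuousLinearMap.add_apply, ContinuousLinearMap.smul_apply,
        innerSL_apply_apply, PiLp.proj_apply, if_pos rfl, nsmul_eq_mul,
        smul_eq_mul]
      rw [EuclideanSpace.inner_single_right]
      simp only [EuclideanSpace.single_apply, if_pos rfl, ↓reduceIte, conj_trivial, map_one, mul_one, one_mul]
      field_simp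
      ring
  · refine ⟨(-(n:ℝ)/2 * x i) • (-((‖x‖^2)^2)⁻¹ • ((2:ℕ) • innerSL ℝ x)) +
        (‖x‖^2)⁻¹ • ((-(n:ℝ)/2) • (EuclideanSpace.proj i : EuclideanSpace ℝ (Fin n) →L[ℝ] ℝ)), ?_, ?_⟩
    · simpa only [if_neg h, add_zero, div_eq_mul_inv] using hmul
    · simp only [ContinuousLinearMap.add_apply, ContinuousLinearMap.smul_apply,
        innerSL_apply_apply, PiLp.proj_apply, if_neg h, nsmul_eq_mul,
        smul_eq_mul]
      rw [EuclideanSpace.inner_single_right]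
      simp only [EuclideanSpace.single_apply, if_pos rfl, ↓reduceIte, conj_trivial, map_one, mul_one, one_mul]
      field_simp
      ring

lemma cf_contDiffAt {n : ℕ} (i0 i : Fin n) (x : EuclideanSpace ℝ (Fin n)) (hx : x i0 ≠ 0) :
    ContDiffAt ℝ (⊤ : ℕ∞) (cf n i0 i) x := by
  have hxne : x ≠ 0 := fun h => hx (by simp [h])
  have hr : ‖x‖^2 ≠ 0 := pow_ne_zero _ (norm_ne_zero_iff.2 hxne)
  have hproj : ∀ j : Fin n, ContDiff ℝ (⊤ : ℕ∞) (fun y : EuclideanSpace ℝ (Fin n) => y j) :=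
    fun j => (EuclideanSpace.proj (𝕜 := ℝ) j).contDiff
  have h1 : ContDiffAt ℝ (⊤ : ℕ∞) (fun y : EuclideanSpace ℝ (Fin n) => (-(n:ℝ)/2) * y i / ‖y‖^2) x :=
    ((contDiffAt_const.mul (hproj i).contDiffAt).div (contDiff_norm_sq ℝ).contDiffAt hr)
  unfold cf
  by_cases h : i = i0
  · subst h
    exact h1.add (((hproj i).contDiffAt.inv hx).congr_of_eventuallyEq
      (Filter.Eventually.of_forall fun y => by simp))
  · simpa only [if_neg h, add_zero] using h1

lemma sum_cf_sq {n : ℕ} (i0 : Fin n) (x : EuclideanSpace ℝ (Fin n)) (hx : x i0 ≠ 0) :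
    ∑ i, (cf n i0 i x)^2 = ((n:ℝ)^2/4) / ‖x‖^2 - (n:ℝ) / ‖x‖^2 + ((x i0)^2)⁻¹ := by
  have hxne : x ≠ 0 := fun h => hx (by simp [h])
  have hr : ‖x‖^2 ≠ 0 := pow_ne_zero _ (norm_ne_zero_iff.2 hxne)
  have hsum : ∑ i, (x i)^2 = ‖x‖^2 := (euclid_norm_sq_eq_sum x).symm
  have hterm : ∀ i, (cf n i0 i x)^2 =
      ((-(n:ℝ)/2) / ‖x‖^2)^2 * (x i)^2 +
      (if i = i0 then 2*((-(n:ℝ)/2) * (x i0) / ‖x‖^2)*(x i0)⁻¹ + ((x i0)⁻¹)^2 else 0) := by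
    intro i
    by_cases h : i = i0
    · subst h; simp only [cf, eq_self_iff_true, if_true]; ring
    · simp only [cf, if_neg h]; ring
  rw [Finset.sum_congr rfl fun i _ => hterm i, Finset.sum_add_distrib, ← Finset.mul_sum, hsum]
  rw [Finset.sum_ite_eq' Finset.univ i0]
  simp only [Finset.mem_univ, if_pos]
  field_simp
  ring

lemma sum_dcf {n : ℕ} (i0 : Fin n) (x : EuclideanSpace ℝ (Fin n)) (hx : x i0 ≠ 0) :
    ∑ i, dcf n i0 i x = (-(n:ℝ)^2/2 + (n:ℝ)) / ‖x‖^2 - ((x i0)^2)⁻¹ := by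
  have hxne : x ≠ 0 := fun h => hx (by simp [h])
  have hr : ‖x‖^2 ≠ 0 := pow_ne_zero _ (norm_ne_zero_iff.2 hxne)
  have hsum : ∑ i, (x i)^2 = ‖x‖^2 := (euclid_norm_sq_eq_sum x).symm
  unfold dcf
  rw [Finset.sum_add_distrib, Finset.sum_ite_eq' Finset.univ i0]
  have h2 : ∑ i, (-(n:ℝ)/2) * (‖x‖^2 - 2*(x i)^2) / (‖x‖^2)^2
      = (-(n:ℝ)/2) * ((n:ℝ)*‖x‖^2 - 2*‖x‖^2) / (‖x‖^2)^2 := by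
    rw [← Finset.sum_div, ← Finset.mul_sum]
    congr 2
    rw [Finset.sum_sub_distrib, Finset.sum_const, ← Finset.mul_sum, hsum]
    simp [nsmul_eq_mul]
  rw [h2]
  simp only [Finset.mem_univ, if_pos]
  field_simp
  ring

theorem hardy_inequality_halfspace (n : ℕ) (hn : 3 ≤ n) (i0 : Fin n) (hi0 : (i0 : ℕ) = 0)
    (u : EuclideanSpace ℝ (Fin n) → ℝ) (hu : ContDiff ℝ (⊤ : ℕ∞) u)
    (hcs : HasCompactSupport u)
    (hsupp : tsupport u ⊆ {x : EuclideanSpace ℝ (Fin n) | 0 < x i0}) :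
    ((n : ℝ) ^ 2 / 4) * ∫ x in {x : EuclideanSpace ℝ (Fin n) | 0 < x i0}, (u x) ^ 2 / ‖x‖ ^ 2 ≤
      ∫ x in {x : EuclideanSpace ℝ (Fin n) | 0 < x i0}, ‖fderiv ℝ u x‖ ^ 2 := by
  classical
  set K := tsupport u with hK
  have hpos : ∀ x ∈ K, 0 < x i0 := fun x hx => hsupp hx
  have hu0 : ∀ x, x ∉ K → u x = 0 := fun x hx => image_eq_zero_of_notMem_tsupport hx
  set F : Fin n → EuclideanSpace ℝ (Fin n) → ℝ := fun i x => (u x)^2 * cf n i0 i x with hFdef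
  -- smoothness of F i
  have hFs : ∀ i, ContDiff ℝ (⊤ : ℕ∞) (F i) := by
    intro i
    rw [contDiff_iff_contDiffAt]
    intro x
    by_cases hx : x ∈ K
    · exact ((hu.contDiffAt.pow 2).mul (cf_contDiffAt i0 i x (ne_of_gt (hpos x hx))))
    · have h0 : u =ᶠ[nhds x] 0 := notMem_tsupport_iff_eventuallyEq.1 hx
      have hF0 : F i =ᶠ[nhds x] 0 := h0.mono fun y hy => by
        simp only [hFdef, Pi.zero_apply] at hy ⊢; simp [hy]
      exact (contDiffAt_const (c := 0)).congr_of_eventuallyEq hF0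
  have hFcs : ∀ i, HasCompactSupport (F i) := by
    intro i
    apply hcs.mono'
    intro x hx
    by_contra hxx
    exact hx (by simp [hFdef, hu0 x hxx])
  -- value of the derivative on the support
  have hFval : ∀ i, ∀ x : EuclideanSpace ℝ (Fin n), x i0 ≠ 0 →
      fderiv ℝ (F i) x (EuclideanSpace.single i 1)
        = 2 * u x * (fderiv ℝ u x (EuclideanSpace.single i 1)) * cf n i0 i x
          + (u x)^2 * dcf n i0 i x := by
    intro i x hx
    obtain ⟨C, hC, hCval⟩ := cf_hasFDerivAt i0 i x hx
    have hu' : HasFDerivAt u (fderiv ℝ u x) x := (hu.differentiable (by simp) x).hasFDerivAt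
    have h2 : HasFDerivAt (fun y => (u y)^2) ((2 * u x) • fderiv ℝ u x) x := by
      have := hu'.mul hu'
      rw [two_mul, add_smul]
      refine HasFDerivAt.congr_of_eventuallyEq this ?_
      exact Filter.Eventually.of_forall fun y => by simp only [Pi.mul_apply]; ring
    have hmulF : HasFDerivAt (F i) (((u x)^2) • C + (cf n i0 i x) • ((2 * u x) • fderiv ℝ u x)) x :=
      h2.mul hC
    rw [hmulF.fderiv]
    simp only [ContinuousLinearMap.add_apply, ContinuousLinearMap.smul_apply, smul_eq_mul, hCval]
    ring
  -- support of F i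
  have htsuppF : ∀ i, tsupport (F i) ⊆ K := fun i =>
    closure_minimal (fun y hy => by
      by_contra hyy
      exact hy (by simp [hFdef, hu0 y hyy])) (isClosed_tsupport u)
  -- integrability of the divergence terms
  have higF : ∀ i, Integrable (fun x => fderiv ℝ (F i) x (EuclideanSpace.single i 1)) :=
    fun i => (((hFs i).continuous_fderiv (by simp)).clm_apply
      continuous_const).integrable_of_hasCompactSupport ((hFcs i).fderiv_apply ℝ _)
  have higdiv : Integrable
      (fun x => ∑ i, fderiv ℝ (F i) x (EuclideanSpace.single i 1)) :=
    integrable_finset_sum _ fun i _ => higF i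
  have hintdiv : ∫ x, (∑ i, fderiv ℝ (F i) x (EuclideanSpace.single i 1)) = 0 := by
    rw [integral_finset_sum _ fun i _ => higF i]
    exact Finset.sum_eq_zero fun i _ => integral_fderiv_apply_eq_zero (hFs i) (hFcs i) _
  -- integrability of the two main integrands
  have hg1cont : Continuous (fun x : EuclideanSpace ℝ (Fin n) => (u x)^2 / ‖x‖^2) := by
    rw [continuous_iff_continuousAt]
    intro x
    by_cases hx : x = 0
    · subst hx
      have h0K : (0 : EuclideanSpace ℝ (Fin n)) ∉ K := fun h => by simpa using hpos _ h
      have h0 : u =ᶠ[nhds (0 : EuclideanSpace ℝ (Fin n))] 0 :=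
        notMem_tsupport_iff_eventuallyEq.1 h0K
      have hev : (fun x : EuclideanSpace ℝ (Fin n) => (u x)^2/‖x‖^2)
          =ᶠ[nhds (0 : EuclideanSpace ℝ (Fin n))] (fun _ => (0:ℝ)) := h0.mono fun y hy => by
        simp only [Pi.zero_apply] at hy
        simp [hy]
      exact ContinuousAt.congr continuousAt_const hev.symm
    · have hr : ‖x‖^2 ≠ 0 := pow_ne_zero _ (norm_ne_zero_iff.2 hx)
      exact ((hu.continuous.pow 2).continuousAt).div ((continuous_norm.pow 2).continuousAt) hr
  have hg1cs : HasCompactSupport (fun x : EuclideanSpace ℝ (Fin n) => (u x)^2/‖x‖^2) :=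
    hcs.mono' (fun x hx => by
      by_contra hxx
      exact hx (by simp [hu0 x hxx]))
  have hig1 : Integrable (fun x : EuclideanSpace ℝ (Fin n) => (u x)^2/‖x‖^2) :=
    hg1cont.integrable_of_hasCompactSupport hg1cs
  have hg2cont : Continuous (fun x : EuclideanSpace ℝ (Fin n) => ‖fderiv ℝ u x‖^2) :=
    ((hu.continuous_fderiv (by simp)).norm).pow 2
  have hg2cs : HasCompactSupport (fun x : EuclideanSpace ℝ (Fin n) => ‖fderiv ℝ u x‖^2) :=
    hcs.mono' (fun x hx => by
      by_contra hxx
      exact hx (by show ‖fderiv ℝ u x‖^2 = 0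
                   rw [fderiv_of_notMem_tsupport _ hxx]; simp))
  have hig2 : Integrable (fun x : EuclideanSpace ℝ (Fin n) => ‖fderiv ℝ u x‖^2) :=
    hg2cont.integrable_of_hasCompactSupport hg2cs
  -- pointwise inequality
  have hpoint : ∀ x, ((n:ℝ)^2/4) * ((u x)^2/‖x‖^2)
      + (∑ i, fderiv ℝ (F i) x (EuclideanSpace.single i 1)) ≤ ‖fderiv ℝ u x‖^2 := by
    intro x
    by_cases hx : x ∈ K
    · have hx0 : x i0 ≠ 0 := ne_of_gt (hpos x hx)
      rw [euclid_clm_norm_sq (fderiv ℝ u x)]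
      have hdF : ∑ i, fderiv ℝ (F i) x (EuclideanSpace.single i 1)
          = ∑ i, (2 * u x * (fderiv ℝ u x (EuclideanSpace.single i 1)) * cf n i0 i x
              + (u x)^2 * dcf n i0 i x) :=
        Finset.sum_congr rfl fun i _ => hFval i x hx0
      rw [hdF]
      set a := u x with ha
      set p : Fin n → ℝ := fun i => fderiv ℝ u x (EuclideanSpace.single i 1) with hp
      have key : (0:ℝ) ≤ ∑ i, (p i - a * cf n i0 i x)^2 :=
        Finset.sum_nonneg fun i _ => sq_nonneg _
      have expand : ∑ i, (p i - a * cf n i0 i x)^2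
          = ∑ i, (p i)^2 - ∑ i, (2 * a * p i * cf n i0 i x)
            + a^2 * ∑ i, (cf n i0 i x)^2 := by
        have h : ∀ i ∈ Finset.univ, (p i - a * cf n i0 i x)^2
            = (p i)^2 - 2*a*(p i)*(cf n i0 i x) + a^2*(cf n i0 i x)^2 := fun i _ => by ring
        rw [Finset.sum_congr rfl h, Finset.sum_add_distrib, Finset.sum_sub_distrib,
          ← Finset.mul_sum]
      have hsplit : ∑ i, (2 * a * p i * cf n i0 i x + a^2 * dcf n i0 i x)
          = ∑ i, (2*a*(p i)*(cf n i0 i x)) + a^2 * ∑ i, dcf n i0 i x := by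
        rw [Finset.sum_add_distrib, ← Finset.mul_sum]
      rw [hsplit]
      have hcc := sum_cf_sq i0 x hx0
      have hdc := sum_dcf i0 x hx0
      have hzero : ((n:ℝ)^2/4) * (a^2/‖x‖^2) + a^2 * (∑ i, (cf n i0 i x)^2)
          + a^2 * (∑ i, dcf n i0 i x) = 0 := by
        have hxne : x ≠ 0 := fun h => hx0 (by simp [h])
        have hr : ‖x‖^2 ≠ 0 := pow_ne_zero _ (norm_ne_zero_iff.2 hxne)
        rw [hcc, hdc]
        field_simp
        ring
      rw [expand] at key
      linarith [key, hzero]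
    · have hu0x : u x = 0 := hu0 x hx
      have hdF : ∑ i, fderiv ℝ (F i) x (EuclideanSpace.single i 1) = 0 :=
        Finset.sum_eq_zero fun i _ => by
          rw [fderiv_of_notMem_tsupport _ (fun h => hx (htsuppF i h))]
          simp
      rw [hu0x, hdF]
      simp
  -- assemble
  have hset1 : ∫ x in {x : EuclideanSpace ℝ (Fin n) | 0 < x i0}, (u x)^2/‖x‖^2
      = ∫ x, (u x)^2/‖x‖^2 :=
    setIntegral_eq_integral_of_forall_compl_eq_zero fun x hx => by
      rw [hu0 x (fun hk => hx (hsupp hk))]; simp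
  have hset2 : ∫ x in {x : EuclideanSpace ℝ (Fin n) | 0 < x i0}, ‖fderiv ℝ u x‖^2
      = ∫ x, ‖fderiv ℝ u x‖^2 :=
    setIntegral_eq_integral_of_forall_compl_eq_zero fun x hx => by
      rw [fderiv_of_notMem_tsupport _ (fun hk => hx (hsupp hk))]; simp
  rw [hset1, hset2]
  have hile : ∫ x, (((n:ℝ)^2/4) * ((u x)^2/‖x‖^2)
        + (∑ i, fderiv ℝ (F i) x (EuclideanSpace.single i 1)))
      ≤ ∫ x, ‖fderiv ℝ u x‖^2 :=
    integral_mono ((hig1.const_mul _).add higdiv) hig2 hpoint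
  have heq : ∫ x, (((n:ℝ)^2/4) * ((u x)^2/‖x‖^2)
        + (∑ i, fderiv ℝ (F i) x (EuclideanSpace.single i 1)))
      = ((n:ℝ)^2/4) * ∫ x, (u x)^2/‖x‖^2 := by
    rw [integral_add (hig1.const_mul _) higdiv, hintdiv, add_zero, integral_const_mul]
  rw [← heq]
  exact hile
end
end

section
/- The Hardy constant of the half-space is not attained: there is no u ∈ C_c^∞(ℝⁿ₊) with u ≢ 0 such that ∫_{ℝⁿ₊} |∇u|² dx = (n²/4) ∫_{ℝⁿ₊} u²/|x|² dx, for n ≥ 3. -/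
open MeasureTheory Filter

noncomputable section

namespace HardyNotAttained

variable {n : ℕ} (i0 : Fin n)

/-- squared norm as a sum of squares -/
def Nq (x : EuclideanSpace ℝ (Fin n)) : ℝ := ∑ i, x i ^ 2

lemma Nq_eq (x : EuclideanSpace ℝ (Fin n)) : Nq x = ‖x‖ ^ 2 := by
  rw [EuclideanSpace.norm_eq, Real.sq_sqrt (by positivity)]
  simp [Nq, sq_abs]

lemma Nq_pos {x : EuclideanSpace ℝ (Fin n)} (hx : 0 < x i0) : 0 < Nq x := by
  have h1 : x i0 ^ 2 ≤ Nq x :=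
    Finset.single_le_sum (f := fun i => x i ^ 2) (fun i _ => sq_nonneg _)
      (Finset.mem_univ i0)
  nlinarith

lemma continuous_Nq : Continuous (Nq (n := n)) := by
  apply continuous_finset_sum
  intro i _
  exact ((EuclideanSpace.proj i : EuclideanSpace ℝ (Fin n) →L[ℝ] ℝ).continuous).pow 2

/-- derivative of `Nq` -/
def LN (x : EuclideanSpace ℝ (Fin n)) : EuclideanSpace ℝ (Fin n) →L[ℝ] ℝ :=
  ∑ i, (2 * x i) • (EuclideanSpace.proj i : EuclideanSpace ℝ (Fin n) →L[ℝ] ℝ)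

lemma LN_apply (x v : EuclideanSpace ℝ (Fin n)) : LN x v = ∑ i, 2 * x i * v i := by
  simp [LN, ContinuousLinearMap.sum_apply]

lemma LN_single (x : EuclideanSpace ℝ (Fin n)) (j : Fin n) :
    LN x (EuclideanSpace.single j 1) = 2 * x j := by
  rw [LN_apply]
  rw [Finset.sum_eq_single j]
  · simp
  · intro i _ hij
    simp [EuclideanSpace.single_apply, hij]
  · simp

lemma hasFDerivAt_Nq (x : EuclideanSpace ℝ (Fin n)) : HasFDerivAt Nq (LN x) x := by
  have : ∀ i : Fin n, HasFDerivAt (fun y : EuclideanSpace ℝ (Fin n) => y i ^ 2)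
      ((2 * x i) • (EuclideanSpace.proj i : EuclideanSpace ℝ (Fin n) →L[ℝ] ℝ)) x := by
    intro i
    have h := ((EuclideanSpace.proj i : EuclideanSpace ℝ (Fin n) →L[ℝ] ℝ).hasFDerivAt (x := x)).mul
      ((EuclideanSpace.proj i : EuclideanSpace ℝ (Fin n) →L[ℝ] ℝ).hasFDerivAt (x := x))
    have h2 : (fun y : EuclideanSpace ℝ (Fin n) =>
        (EuclideanSpace.proj i : EuclideanSpace ℝ (Fin n) →L[ℝ] ℝ) y *
        (EuclideanSpace.proj i : EuclideanSpace ℝ (Fin n) →L[ℝ] ℝ) y) = fun y => y i ^ 2 := by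
      funext y; simp [sq]
    replace h : HasFDerivAt (fun y : EuclideanSpace ℝ (Fin n) => (EuclideanSpace.proj i : EuclideanSpace ℝ (Fin n) →L[ℝ] ℝ) y * (EuclideanSpace.proj i : EuclideanSpace ℝ (Fin n) →L[ℝ] ℝ) y) _ x := h
    rw [h2] at h
    refine h.congr_fderiv ?_
    have hx : (EuclideanSpace.proj i : EuclideanSpace ℝ (Fin n) →L[ℝ] ℝ) x = x i := rfl
    rw [hx]
    module
  exact HasFDerivAt.fun_sum (fun i _ => this i)


/-- the vector field W, componentwise -/
def Wc (i : Fin n) (x : EuclideanSpace ℝ (Fin n)) : ℝ :=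
  (if i = i0 then (x i0)⁻¹ else 0) - ((n : ℝ) / 2) * (Nq x)⁻¹ * x i

/-- the divergence-type derivative values ∂ᵢ (Wc i) -/
def DWv (i : Fin n) (x : EuclideanSpace ℝ (Fin n)) : ℝ :=
  (if i = i0 then -((x i0)⁻¹) ^ 2 else 0)
    - ((n : ℝ) / 2) * ((Nq x)⁻¹ - 2 * x i ^ 2 * ((Nq x)⁻¹) ^ 2)

/-- full derivative of `Wc i` at `x` -/
def LW (i : Fin n) (x : EuclideanSpace ℝ (Fin n)) : EuclideanSpace ℝ (Fin n) →L[ℝ] ℝ :=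
  (if i = i0 then (-((x i0) ^ 2)⁻¹) • (EuclideanSpace.proj i0 : EuclideanSpace ℝ (Fin n) →L[ℝ] ℝ)
    else 0)
  - ((((n : ℝ) / 2) * (Nq x)⁻¹) • (EuclideanSpace.proj i : EuclideanSpace ℝ (Fin n) →L[ℝ] ℝ)
      + x i • (((n : ℝ) / 2) • ((-((Nq x) ^ 2)⁻¹) • LN x)))

lemma hasFDerivAt_Wc (i : Fin n) (x : EuclideanSpace ℝ (Fin n)) (hN : Nq x ≠ 0)
    (h0 : x i0 ≠ 0) : HasFDerivAt (Wc i0 i) (LW i0 i x) x := by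
  have hNinv : HasFDerivAt (fun y : EuclideanSpace ℝ (Fin n) => (Nq y)⁻¹)
      ((-((Nq x) ^ 2)⁻¹) • LN x) x :=
    (hasDerivAt_inv hN).comp_hasFDerivAt x (hasFDerivAt_Nq x)
  have hc : HasFDerivAt (fun y : EuclideanSpace ℝ (Fin n) => ((n : ℝ) / 2) * (Nq y)⁻¹)
      (((n : ℝ) / 2) • ((-((Nq x) ^ 2)⁻¹) • LN x)) x := hNinv.const_mul _
  have h2 : HasFDerivAt (fun y : EuclideanSpace ℝ (Fin n) => ((n : ℝ) / 2) * (Nq y)⁻¹ * y i)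
      ((((n : ℝ) / 2) * (Nq x)⁻¹) • (EuclideanSpace.proj i : EuclideanSpace ℝ (Fin n) →L[ℝ] ℝ)
        + x i • (((n : ℝ) / 2) • ((-((Nq x) ^ 2)⁻¹) • LN x))) x := by
    have := hc.mul ((EuclideanSpace.proj i : EuclideanSpace ℝ (Fin n) →L[ℝ] ℝ).hasFDerivAt (x := x))
    exact this
  have h1 : HasFDerivAt (fun y : EuclideanSpace ℝ (Fin n) => if i = i0 then (y i0)⁻¹ else 0)
      (if i = i0 then (-((x i0) ^ 2)⁻¹) •
        (EuclideanSpace.proj i0 : EuclideanSpace ℝ (Fin n) →L[ℝ] ℝ) else 0) x := by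
    by_cases h : i = i0
    · simp only [h, if_true]
      exact (hasDerivAt_inv h0).comp_hasFDerivAt x
        ((EuclideanSpace.proj i0 : EuclideanSpace ℝ (Fin n) →L[ℝ] ℝ).hasFDerivAt (x := x))
    · simp only [h, if_false]
      exact hasFDerivAt_const 0 x
  exact h1.sub h2

lemma LW_single (i : Fin n) (x : EuclideanSpace ℝ (Fin n)) :
    LW i0 i x (EuclideanSpace.single i 1) = DWv i0 i x := by
  have hproj : ∀ j k : Fin n,
      (EuclideanSpace.proj j : EuclideanSpace ℝ (Fin n) →L[ℝ] ℝ)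
        (EuclideanSpace.single k 1) = if j = k then 1 else 0 := by
    intro j k
    have : (EuclideanSpace.proj j : EuclideanSpace ℝ (Fin n) →L[ℝ] ℝ)
        (EuclideanSpace.single k 1) = (EuclideanSpace.single k (1:ℝ)) j := rfl
    rw [this, EuclideanSpace.single_apply]
  simp only [LW, DWv, ContinuousLinearMap.sub_apply, ContinuousLinearMap.add_apply,
    ContinuousLinearMap.smul_apply, LN_single]
  by_cases h : i = i0
  · subst h
    simp only [if_true, hproj, if_true, ContinuousLinearMap.smul_apply, smul_eq_mul]
    rw [← inv_pow, ← inv_pow]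
    ring
  · simp only [h, if_false, ContinuousLinearMap.zero_apply, hproj, if_true, smul_eq_mul]
    rw [← inv_pow]
    ring


/-- the half space -/
def posHalf : Set (EuclideanSpace ℝ (Fin n)) := {x | 0 < x i0}

lemma isOpen_posHalf : IsOpen (posHalf i0) :=
  isOpen_lt continuous_const (EuclideanSpace.proj i0 : EuclideanSpace ℝ (Fin n) →L[ℝ] ℝ).continuous

lemma convex_posHalf : Convex ℝ (posHalf i0) := by
  have : posHalf i0 = {x : EuclideanSpace ℝ (Fin n) | 0 < EuclideanSpace.projₗ i0 x} := rfl
  rw [this]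
  exact convex_halfSpace_gt (LinearMap.isLinear _) 0

lemma contOn_inv_Nq : ContinuousOn (fun x : EuclideanSpace ℝ (Fin n) => (Nq x)⁻¹) (posHalf i0) :=
  (continuous_Nq.continuousOn).inv₀ (fun x hx => ne_of_gt (Nq_pos i0 hx))

lemma contOn_proj (i : Fin n) :
    ContinuousOn (fun x : EuclideanSpace ℝ (Fin n) => x i) (posHalf i0) :=
  ((EuclideanSpace.proj i : EuclideanSpace ℝ (Fin n) →L[ℝ] ℝ).continuous).continuousOn

lemma contOn_Wc (i : Fin n) : ContinuousOn (Wc i0 i) (posHalf i0) := by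
  apply ContinuousOn.sub
  · by_cases h : i = i0
    · simp only [Wc, h, if_true]
      exact (contOn_proj i0 i0).inv₀ (fun x hx => ne_of_gt hx)
    · simp only [h, if_false]
      exact continuousOn_const
  · exact (continuousOn_const.mul (contOn_inv_Nq i0)).mul (contOn_proj i0 i)

lemma contOn_DWv (i : Fin n) : ContinuousOn (DWv i0 i) (posHalf i0) := by
  apply ContinuousOn.sub
  · by_cases h : i = i0
    · simp only [DWv, h, if_true]
      exact (((contOn_proj i0 i0).inv₀ (fun x hx => ne_of_gt hx)).pow 2).neg
    · simp only [h, if_false]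
      exact continuousOn_const
  · exact continuousOn_const.mul ((contOn_inv_Nq i0).sub
      ((continuousOn_const.mul ((contOn_proj i0 i).pow 2)).mul ((contOn_inv_Nq i0).pow 2)))

lemma sum_DWv_add_sq (x : EuclideanSpace ℝ (Fin n)) (hN : Nq x ≠ 0) (h0 : x i0 ≠ 0) :
    ∑ i, (DWv i0 i x + (Wc i0 i x) ^ 2) = -(((n : ℝ) / 2) ^ 2) * (Nq x)⁻¹ := by
  have hterm : ∀ i : Fin n, DWv i0 i x + (Wc i0 i x) ^ 2
      = (if i = i0 then (-2 * (x i0)⁻¹ * (((n : ℝ) / 2) * (Nq x)⁻¹ * x i0)) else 0)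
        + (-((n : ℝ) / 2) * (Nq x)⁻¹
            + x i ^ 2 * (((n : ℝ) / 2) ^ 2 * ((Nq x)⁻¹) ^ 2 + (n : ℝ) * ((Nq x)⁻¹) ^ 2)) := by
    intro i
    by_cases h : i = i0
    · subst h; simp only [DWv, Wc, eq_self_iff_true, if_true]; ring
    · simp only [DWv, Wc, h, if_false]; ring
  rw [Finset.sum_congr rfl (fun i _ => hterm i), Finset.sum_add_distrib,
    Finset.sum_ite_eq' Finset.univ i0, Finset.sum_add_distrib, Finset.sum_const,
    ← Finset.sum_mul]
  have hsum : (∑ i, x i ^ 2) = Nq x := rfl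
  rw [hsum]
  simp only [Finset.mem_univ, if_true, Finset.card_univ, Fintype.card_fin, nsmul_eq_mul]
  field_simp
  ring

/-- linear-form version of the vector field W -/
def Wlin (x : EuclideanSpace ℝ (Fin n)) : EuclideanSpace ℝ (Fin n) →L[ℝ] ℝ :=
  (x i0)⁻¹ • (EuclideanSpace.proj i0 : EuclideanSpace ℝ (Fin n) →L[ℝ] ℝ)
    - (((n : ℝ) / 4) * (Nq x)⁻¹) • LN x

lemma Wlin_apply (x v : EuclideanSpace ℝ (Fin n)) :
    Wlin i0 x v = (x i0)⁻¹ * v i0 - ((n : ℝ) / 4) * (Nq x)⁻¹ * LN x v := by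
  simp only [Wlin, ContinuousLinearMap.sub_apply, ContinuousLinearMap.smul_apply, smul_eq_mul]
  have h : (EuclideanSpace.proj i0 : EuclideanSpace ℝ (Fin n) →L[ℝ] ℝ) v = v i0 := rfl
  rw [h]

lemma Wlin_single (x : EuclideanSpace ℝ (Fin n)) (j : Fin n) :
    Wlin i0 x (EuclideanSpace.single j 1) = Wc i0 j x := by
  rw [Wlin_apply, LN_single, Wc]
  have : (EuclideanSpace.single j (1:ℝ)) i0 = if i0 = j then 1 else 0 := by
    rw [EuclideanSpace.single_apply]
  rw [this]
  by_cases h : j = i0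
  · subst h; simp only [eq_self_iff_true, if_true]; ring
  · rw [if_neg (fun hh => h hh.symm), if_neg h]
    ring


lemma normsq_fderiv (L : EuclideanSpace ℝ (Fin n) →L[ℝ] ℝ) :
    ‖L‖ ^ 2 = ∑ i, (L (EuclideanSpace.single i 1)) ^ 2 := by
  set w := (InnerProductSpace.toDual ℝ (EuclideanSpace ℝ (Fin n))).symm L with hw
  have h1 : ‖L‖ = ‖w‖ := by rw [hw]; simp
  have h2 : ∀ i, w i = L (EuclideanSpace.single i 1) := by
    intro i
    have := InnerProductSpace.toDual_symm_apply (𝕜 := ℝ) (y := L)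
      (x := EuclideanSpace.single i (1 : ℝ))
    rw [← this, real_inner_comm, EuclideanSpace.inner_single_left]
    simp
    rfl
  rw [h1, EuclideanSpace.norm_eq, Real.sq_sqrt (by positivity)]
  simp [sq_abs, h2]

lemma glue_continuous {S K : Set (EuclideanSpace ℝ (Fin n))} (hS : IsOpen S)
    (hKc : IsClosed K) (hKS : K ⊆ S) {h : EuclideanSpace ℝ (Fin n) → ℝ}
    (hcont : ContinuousOn h S) (h0 : ∀ x ∉ K, h x = 0) : Continuous h := by
  rw [continuous_iff_continuousAt]
  intro x
  by_cases hx : x ∈ S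
  · exact hcont.continuousAt (hS.mem_nhds hx)
  · have hxK : x ∉ K := fun h' => hx (hKS h')
    have hev : h =ᶠ[nhds x] fun _ => (0 : ℝ) :=
      eventually_of_mem (hKc.isOpen_compl.mem_nhds hxK) (fun y hy => h0 y hy)
    exact ContinuousAt.congr continuousAt_const hev.symm

lemma glue_integrable {S K : Set (EuclideanSpace ℝ (Fin n))} (hS : IsOpen S)
    (hK : IsCompact K) (hKS : K ⊆ S) {h : EuclideanSpace ℝ (Fin n) → ℝ}
    (hcont : ContinuousOn h S) (h0 : ∀ x ∉ K, h x = 0) : Integrable h := by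
  exact (glue_continuous hS hK.isClosed hKS hcont h0).integrable_of_hasCompactSupport
    (HasCompactSupport.intro hK h0)

end HardyNotAttained


open HardyNotAttained

theorem hardy_halfspace_not_attained (n : ℕ) (hn : 3 ≤ n) (i0 : Fin n) (hi0 : (i0 : ℕ) = 0) :
    ¬ ∃ u : EuclideanSpace ℝ (Fin n) → ℝ,
      ContDiff ℝ (⊤ : ℕ∞) u ∧ HasCompactSupport u ∧
      tsupport u ⊆ {x : EuclideanSpace ℝ (Fin n) | 0 < x i0} ∧ u ≠ 0 ∧
      (∫ x in {x : EuclideanSpace ℝ (Fin n) | 0 < x i0}, ‖fderiv ℝ u x‖ ^ 2) =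
        ((n : ℝ) ^ 2 / 4) *
          ∫ x in {x : EuclideanSpace ℝ (Fin n) | 0 < x i0}, (u x) ^ 2 / ‖x‖ ^ 2 := by
  rintro ⟨u, hu, hcs, hsupp, hne, heq⟩
  classical
  have hSdef : {x : EuclideanSpace ℝ (Fin n) | 0 < x i0} = posHalf i0 := rfl
  rw [hSdef] at hsupp heq
  set S : Set (EuclideanSpace ℝ (Fin n)) := posHalf i0 with hS
  have hSopen : IsOpen S := isOpen_posHalf i0
  have hSmeas : MeasurableSet S := hSopen.measurableSet
  have hKcmp : IsCompact (tsupport u) := hcs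
  have hKS : tsupport u ⊆ S := hsupp
  have hKcl : IsClosed (tsupport u) := isClosed_tsupport u
  have hu_diff : Differentiable ℝ u := hu.differentiable (by simp)
  have hu_cont : Continuous u := hu.continuous
  have hu_fc : Continuous (fun x => fderiv ℝ u x) := (hu.fderiv_right (m := (⊤ : ℕ∞)) (by simp)).continuous
  have hev : ∀ x ∉ tsupport u, u =ᶠ[nhds x] fun _ => (0 : ℝ) := fun x hx =>
    Filter.eventually_of_mem (hKcl.isOpen_compl.mem_nhds hx)
      (fun y hy => image_eq_zero_of_notMem_tsupport hy)
  have hfz : ∀ x ∉ tsupport u, fderiv ℝ u x = 0 := fun x hx =>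
    ((hev x hx).fderiv_eq).trans (fderiv_const_apply 0)
  have huz : ∀ x ∉ tsupport u, u x = 0 := fun x hx => image_eq_zero_of_notMem_tsupport hx
  have hNne : ∀ x ∈ S, Nq x ≠ 0 := fun x hx => ne_of_gt (Nq_pos i0 hx)
  have hx0ne : ∀ x ∈ S, x i0 ≠ 0 := fun x hx => ne_of_gt hx
  -- directional derivatives of u
  set Du : Fin n → EuclideanSpace ℝ (Fin n) → ℝ :=
    fun i x => fderiv ℝ u x (EuclideanSpace.single i 1) with hDu
  have hDu_cont : ∀ i, Continuous (Du i) := fun i => hu_fc.clm_apply continuous_const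
  have hDu_z : ∀ i, ∀ x ∉ tsupport u, Du i x = 0 := fun i x hx => by
    rw [hDu]; simp only [hfz x hx]; simp
  -- integrands
  set P : Fin n → EuclideanSpace ℝ (Fin n) → ℝ := fun i x =>
    u x ^ 2 * DWv i0 i x + Wc i0 i x * (2 * u x * Du i x) with hP
  set G : Fin n → EuclideanSpace ℝ (Fin n) → ℝ := fun i x => u x ^ 2 * Wc i0 i x with hG
  have husq : ∀ x : EuclideanSpace ℝ (Fin n),
      HasFDerivAt (fun y => u y ^ 2) ((2 * u x) • fderiv ℝ u x) x := by
    intro x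
    have h := (hu_diff x).hasFDerivAt.mul (hu_diff x).hasFDerivAt
    have h2 : (fun y => u y * u y) = fun y => u y ^ 2 := by funext y; ring
    replace h : HasFDerivAt (fun y => u y * u y) _ x := h
    rw [h2] at h
    refine h.congr_fderiv ?_
    module
  have hGderiv : ∀ (i) (x) (_ : x ∈ S), HasFDerivAt (G i)
      (u x ^ 2 • LW i0 i x + Wc i0 i x • ((2 * u x) • fderiv ℝ u x)) x :=
    fun i x hx => (husq x).mul (hasFDerivAt_Wc i0 i x (hNne x hx) (hx0ne x hx))
  have hGev : ∀ (i) (x) (_ : x ∉ tsupport u), G i =ᶠ[nhds x] fun _ => (0 : ℝ) := by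
    intro i x hx
    filter_upwards [hev x hx] with y hy
    simp only [hG, hy]; ring
  have hGdiff : ∀ i, Differentiable ℝ (G i) := by
    intro i x
    by_cases hx : x ∈ S
    · exact (hGderiv i x hx).differentiableAt
    · have hxK : x ∉ tsupport u := fun h => hx (hKS h)
      exact (hGev i x hxK).differentiableAt_iff.mpr (differentiableAt_const 0)
  have hDG : ∀ i x, fderiv ℝ (G i) x (EuclideanSpace.single i 1) = P i x := by
    intro i x
    by_cases hx : x ∈ S
    · rw [(hGderiv i x hx).fderiv]
      simp only [ContinuousLinearMap.add_apply, ContinuousLinearMap.smul_apply, smul_eq_mul,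
        LW_single, hP]
      try ring
    · have hxK : x ∉ tsupport u := fun h => hx (hKS h)
      have h1 : fderiv ℝ (G i) x = 0 := ((hGev i x hxK).fderiv_eq).trans (fderiv_const_apply 0)
      rw [h1, hP]
      simp [huz x hxK, hDu_z i x hxK]
  -- continuity and integrability
  have hGcontOn : ∀ i, ContinuousOn (G i) S := fun i =>
    ((hu_cont.continuousOn).pow 2).mul (contOn_Wc i0 i)
  have hGz : ∀ i, ∀ x ∉ tsupport u, G i x = 0 := fun i x hx => by
    rw [hG]; simp [huz x hx]
  have hGint : ∀ i, Integrable (G i) := fun i =>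
    glue_integrable hSopen hKcmp hKS (hGcontOn i) (hGz i)
  have hPcontOn : ∀ i, ContinuousOn (P i) S := fun i => by
    rw [hP]
    exact (((hu_cont.continuousOn).pow 2).mul (contOn_DWv i0 i)).add
      ((contOn_Wc i0 i).mul ((continuousOn_const.mul hu_cont.continuousOn).mul
        ((hDu_cont i).continuousOn)))
  have hPz : ∀ i, ∀ x ∉ tsupport u, P i x = 0 := fun i x hx => by
    rw [hP]; simp [huz x hx]
  have hPint : ∀ i, Integrable (P i) := fun i =>
    glue_integrable hSopen hKcmp hKS (hPcontOn i) (hPz i)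
  -- integration by parts : ∫ P i = 0
  have hIBP : ∀ i, ∫ x, P i x = 0 := by
    intro i
    have hI1 : Integrable (fun x => fderiv ℝ (G i) x (EuclideanSpace.single i 1)
        * (fun _ => (1 : ℝ)) x) := by
      simp only [mul_one]
      exact (hPint i).congr (Filter.Eventually.of_forall fun x => (hDG i x).symm)
    have hI2 : Integrable (fun x => G i x
        * fderiv ℝ (fun _ => (1 : ℝ)) x (EuclideanSpace.single i 1)) := by
      simp only [fderiv_fun_const, Pi.zero_apply, ContinuousLinearMap.zero_apply, mul_zero]
      exact integrable_zero _ _ _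
    have hI3 : Integrable (fun x => G i x * (fun _ => (1 : ℝ)) x) := by
      simp only [mul_one]; exact hGint i
    have h1 := integral_mul_fderiv_eq_neg_fderiv_mul_of_integrable (μ := volume)
      hI1 hI2 hI3 (fun x _ => hGdiff i x) (fun x _ => differentiable_const (1 : ℝ) x)
    simp only [fderiv_fun_const, Pi.zero_apply, ContinuousLinearMap.zero_apply, mul_zero,
      mul_one, integral_zero] at h1
    have h2 : ∫ x, fderiv ℝ (G i) x (EuclideanSpace.single i 1) = 0 := by linarith [h1.symm]
    have h3 : ∫ x, P i x = ∫ x, fderiv ℝ (G i) x (EuclideanSpace.single i 1) :=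
      integral_congr_ae (Filter.Eventually.of_forall fun x => (hDG i x).symm)
    rw [h3]
    exact h2
  -- the quadratic form
  set A1 : EuclideanSpace ℝ (Fin n) → ℝ := fun x => ∑ i, (Du i x) ^ 2 with hA1
  set T : EuclideanSpace ℝ (Fin n) → ℝ :=
    fun x => u x ^ 2 * (∑ i, (DWv i0 i x + (Wc i0 i x) ^ 2)) with hT
  set Q : EuclideanSpace ℝ (Fin n) → ℝ :=
    fun x => ∑ i, (Du i x - u x * Wc i0 i x) ^ 2 with hQ
  set Psum : EuclideanSpace ℝ (Fin n) → ℝ := fun x => ∑ i, P i x with hPsum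
  have hQeq : ∀ x, Q x = A1 x - Psum x + T x := by
    intro x
    have hterm : ∀ i, (Du i x - u x * Wc i0 i x) ^ 2
        = (Du i x) ^ 2 - (u x ^ 2 * DWv i0 i x + Wc i0 i x * (2 * u x * Du i x))
          + u x ^ 2 * (DWv i0 i x + (Wc i0 i x) ^ 2) := fun i => by ring
    rw [hQ, hA1, hPsum, hT, hP]
    simp only
    rw [Finset.sum_congr rfl (fun i _ => hterm i), Finset.sum_add_distrib,
      Finset.sum_sub_distrib, ← Finset.mul_sum]
  have hA1cont : Continuous A1 := by
    rw [hA1]; exact continuous_finset_sum _ fun i _ => (hDu_cont i).pow 2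
  have hA1z : ∀ x ∉ tsupport u, A1 x = 0 := fun x hx => by
    rw [hA1]; simp [hDu_z _ x hx]
  have hA1int : Integrable A1 :=
    hA1cont.integrable_of_hasCompactSupport (HasCompactSupport.intro hKcmp hA1z)
  have hTcontOn : ContinuousOn T S := by
    rw [hT]
    exact ((hu_cont.continuousOn).pow 2).mul (continuousOn_finset_sum _ fun i _ =>
      (contOn_DWv i0 i).add ((contOn_Wc i0 i).pow 2))
  have hTz : ∀ x ∉ tsupport u, T x = 0 := fun x hx => by
    rw [hT]; simp [huz x hx]
  have hTint : Integrable T := glue_integrable hSopen hKcmp hKS hTcontOn hTz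
  have hPsumint : Integrable Psum := by
    rw [hPsum]; exact integrable_finset_sum _ fun i _ => hPint i
  have hPsum0 : ∫ x, Psum x = 0 := by
    rw [hPsum, integral_finset_sum _ fun i _ => hPint i]
    simp only [hIBP, Finset.sum_const_zero]
  have hIQ : ∫ x, Q x = (∫ x, A1 x) - (∫ x, Psum x) + ∫ x, T x := by
    have h1 : ∫ x, (A1 x - Psum x) + T x = (∫ x, A1 x - Psum x) + ∫ x, T x :=
      integral_add (hA1int.sub hPsumint) hTint
    have h2 : ∫ x, A1 x - Psum x = (∫ x, A1 x) - ∫ x, Psum x :=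
      integral_sub hA1int hPsumint
    rw [funext hQeq, h1, h2]
  have hA1eq : ∫ x, A1 x = ∫ x in S, ‖fderiv ℝ u x‖ ^ 2 := by
    have hnorm : A1 = fun x => ‖fderiv ℝ u x‖ ^ 2 := by
      funext x; rw [hA1]; exact (normsq_fderiv (fderiv ℝ u x)).symm
    rw [hnorm]
    exact (setIntegral_eq_integral_of_forall_compl_eq_zero (fun x hx => by
      have hxK : x ∉ tsupport u := fun h => hx (hKS h)
      rw [hfz x hxK]; simp)).symm
  have hTeq : ∫ x, T x = -(((n : ℝ) / 2) ^ 2) * ∫ x in S, u x ^ 2 / ‖x‖ ^ 2 := by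
    have h1 : ∫ x, T x = ∫ x in S, T x :=
      (setIntegral_eq_integral_of_forall_compl_eq_zero
        (fun x hx => hTz x (fun h => hx (hKS h)))).symm
    have h2 : Set.EqOn T (fun x => -(((n : ℝ) / 2) ^ 2) * (u x ^ 2 / ‖x‖ ^ 2)) S := by
      intro x hx
      rw [hT]
      simp only
      rw [sum_DWv_add_sq i0 x (hNne x hx) (hx0ne x hx)]
      rw [div_eq_mul_inv, ← Nq_eq]
      ring
    rw [h1, setIntegral_congr_fun hSmeas h2, integral_const_mul]
  have hQzeroInt : ∫ x, Q x = 0 := by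
    rw [hIQ, hPsum0, hA1eq, hTeq, heq]
    ring
  have hQcont : Continuous Q := by
    apply glue_continuous hSopen hKcl hKS
    · rw [hQ]
      exact continuousOn_finset_sum _ fun i _ =>
        (((hDu_cont i).continuousOn).sub (hu_cont.continuousOn.mul (contOn_Wc i0 i))).pow 2
    · intro x hx
      rw [hQ]
      simp [huz x hx, hDu_z _ x hx]
  have hQnonneg : ∀ x, 0 ≤ Q x := fun x => Finset.sum_nonneg fun i _ => sq_nonneg _
  have hQint : Integrable Q := by
    rw [funext hQeq]; exact (hA1int.sub hPsumint).add hTint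
  have hQzero : ∀ x, Q x = 0 := by
    have hae : Q =ᵐ[volume] 0 :=
      (integral_eq_zero_iff_of_nonneg hQnonneg hQint).mp hQzeroInt
    have := (hQcont.ae_eq_iff_eq volume continuous_const).mp hae
    exact fun x => congrFun this x
  have hgrad : ∀ x ∈ S, ∀ i, Du i x = u x * Wc i0 i x := by
    intro x hx i
    have h0 : ∑ i, (Du i x - u x * Wc i0 i x) ^ 2 = 0 := hQzero x
    have h1 := (Finset.sum_eq_zero_iff_of_nonneg fun i _ => sq_nonneg _).mp h0 i
      (Finset.mem_univ i)
    have h2 : Du i x - u x * Wc i0 i x = 0 := by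
      have := sq_eq_zero_iff.mp h1
      exact this
    linarith [h2]
  -- the full derivative of u on S
  have hfderiv_u : ∀ x ∈ S, fderiv ℝ u x = u x • Wlin i0 x := by
    intro x hx
    apply ContinuousLinearMap.coe_injective
    apply Module.Basis.ext (EuclideanSpace.basisFun (Fin n) ℝ).toBasis
    intro j
    rw [OrthonormalBasis.coe_toBasis, EuclideanSpace.basisFun_apply]
    have h1 : (fderiv ℝ u x : EuclideanSpace ℝ (Fin n) →ₗ[ℝ] ℝ)
        (EuclideanSpace.single j 1) = Du j x := rfl
    have h2 : ((u x • Wlin i0 x : EuclideanSpace ℝ (Fin n) →L[ℝ] ℝ) :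
        EuclideanSpace ℝ (Fin n) →ₗ[ℝ] ℝ) (EuclideanSpace.single j 1)
        = u x * Wc i0 j x := by
      simp only [ContinuousLinearMap.coe_coe, ContinuousLinearMap.smul_apply, smul_eq_mul]
      rw [Wlin_single]
    rw [h1, h2]
    exact hgrad x hx j
  -- the ground state quotient
  set ee : ℝ := (n : ℝ) / 4 with hee
  set Ψ : EuclideanSpace ℝ (Fin n) → ℝ := fun x => Nq x ^ ee * (x i0)⁻¹ with hΨ
  set LΨ : EuclideanSpace ℝ (Fin n) → (EuclideanSpace ℝ (Fin n) →L[ℝ] ℝ) := fun x =>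
    (Nq x ^ ee) • ((-((x i0) ^ 2)⁻¹) •
      (EuclideanSpace.proj i0 : EuclideanSpace ℝ (Fin n) →L[ℝ] ℝ))
    + (x i0)⁻¹ • ((ee * Nq x ^ (ee - 1)) • LN x) with hLΨ
  have hΨderiv : ∀ x ∈ S, HasFDerivAt Ψ (LΨ x) x := by
    intro x hx
    have hrpow : HasFDerivAt (fun y => Nq y ^ ee) ((ee * Nq x ^ (ee - 1)) • LN x) x :=
      (hasFDerivAt_Nq x).rpow_const (Or.inl (hNne x hx))
    have hinv : HasFDerivAt (fun y : EuclideanSpace ℝ (Fin n) => (y i0)⁻¹)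
        ((-((x i0) ^ 2)⁻¹) •
          (EuclideanSpace.proj i0 : EuclideanSpace ℝ (Fin n) →L[ℝ] ℝ)) x :=
      (hasDerivAt_inv (hx0ne x hx)).comp_hasFDerivAt x
        ((EuclideanSpace.proj i0 : EuclideanSpace ℝ (Fin n) →L[ℝ] ℝ).hasFDerivAt)
    exact hrpow.mul hinv
  have hkeyCLM : ∀ x ∈ S, LΨ x + Ψ x • Wlin i0 x = 0 := by
    intro x hx
    ext v
    have hNpos : 0 < Nq x := Nq_pos i0 hx
    have hrw : Nq x ^ (ee - 1) = Nq x ^ ee * (Nq x)⁻¹ := by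
      rw [Real.rpow_sub hNpos, Real.rpow_one, div_eq_mul_inv]
    have hproj : (EuclideanSpace.proj i0 : EuclideanSpace ℝ (Fin n) →L[ℝ] ℝ) v = v i0 := rfl
    simp only [hLΨ, hΨ, ContinuousLinearMap.add_apply, ContinuousLinearMap.smul_apply,
      smul_eq_mul, ContinuousLinearMap.zero_apply, Wlin_apply, hproj, hrw]
    rw [← inv_pow]
    ring
  have hconst : ∀ x ∈ S, ∀ y ∈ S, u x * Ψ x = u y * Ψ y := by
    intro x hx y hy
    have hder : ∀ z ∈ S, HasFDerivAt (fun w => u w * Ψ w)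
        (0 : EuclideanSpace ℝ (Fin n) →L[ℝ] ℝ) z := by
      intro z hz
      have hu' : HasFDerivAt u (u z • Wlin i0 z) z := by
        have := (hu_diff z).hasFDerivAt
        rwa [hfderiv_u z hz] at this
      have hd := hu'.mul (hΨderiv z hz)
      have hzero : u z • LΨ z + Ψ z • (u z • Wlin i0 z) = 0 := by
        have hcomb : u z • LΨ z + Ψ z • (u z • Wlin i0 z)
            = u z • (LΨ z + Ψ z • Wlin i0 z) := by module
        rw [hcomb, hkeyCLM z hz, smul_zero]
      rwa [hzero] at hd
    exact (convex_posHalf i0).is_const_of_fderivWithin_eq_zero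
      (fun z hz => ((hder z hz).differentiableAt).differentiableWithinAt)
      (fun z hz => ((hder z hz).hasFDerivWithinAt).fderivWithin (hSopen.uniqueDiffOn z hz))
      hx hy
  -- conclusion
  obtain ⟨x0, hx0⟩ : ∃ x, u x ≠ 0 := by
    by_contra h
    push_neg at h
    exact hne (funext h)
  have hx0S : x0 ∈ S := hKS (subset_tsupport u hx0)
  obtain ⟨R, hR⟩ := hKcmp.isBounded.subset_closedBall (0 : EuclideanSpace ℝ (Fin n))
  set y : EuclideanSpace ℝ (Fin n) := EuclideanSpace.single i0 (max R 0 + 1) with hy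
  have hyval : y i0 = max R 0 + 1 := by
    rw [hy, EuclideanSpace.single_apply, if_pos rfl]
  have hyS : y ∈ S := by
    show 0 < y i0
    rw [hyval]
    positivity
  have hyK : y ∉ tsupport u := by
    intro hmem
    have h1 := hR hmem
    rw [Metric.mem_closedBall, dist_zero_right, hy, EuclideanSpace.norm_single,
      Real.norm_eq_abs, abs_of_pos (by positivity)] at h1
    have : R ≤ max R 0 := le_max_left R 0
    linarith
  have huy : u y = 0 := huz y hyK
  have hc := hconst x0 hx0S y hyS
  rw [huy, zero_mul] at hc
  have hΨne : Ψ x0 ≠ 0 := by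
    rw [hΨ]
    exact mul_ne_zero (ne_of_gt (Real.rpow_pos_of_pos (Nq_pos i0 hx0S) ee))
      (inv_ne_zero (hx0ne x0 hx0S))
  exact hx0 (by
    have := mul_eq_zero.mp hc
    rcases this with h | h
    · exact h
    · exact absurd h hΨne)
end
end
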